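/- arXiv:2408.09637 — 3 statements merged into one kernel-verified Lean document; each statement's English description precedes it below -/
import Mathlib

section
/- Let κ > 0, Q < 0, S > 0 with Q² - 4κS > 0, and let F : ℝ → ℝ solve F'(t) = κF² + QF + S with F(0) = 0. Then the limit of F(t) as t → ∞ exists and equals -(Q + √(Q² - 4κS))/(2κ). -/
open Set Filter

/-- If the derivative vanishes on `[0, ∞)`, the function is constant there. -/
lemma aux_const_of_deriv_zero {f : ℝ → ℝ} (hf : ∀ t ≥ (0 : ℝ), HasDerivAt f 0 t) :
    ∀ t ≥ (0 : ℝ), f t = f 0 := by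
  intro t ht
  refine constant_of_has_deriv_right_zero (f := f) (a := 0) (b := t) ?_ ?_ t ⟨ht, le_rfl⟩
  · intro x hx
    exact (hf x hx.1).continuousAt.continuousWithinAt
  · intro x hx
    exact (hf x hx.1).hasDerivWithinAt

theorem stmt_1 (κ Q S : ℝ) (hκ : 0 < κ) (hQ : Q < 0) (hS : 0 < S)
    (hdisc : 0 < Q ^ 2 - 4 * κ * S)
    (F : ℝ → ℝ)
    (hF : ∀ t ≥ (0 : ℝ), HasDerivAt F (κ * F t ^ 2 + Q * F t + S) t)
    (hF0 : F 0 = 0) :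
    Filter.Tendsto F Filter.atTop
      (nhds (-(Q + Real.sqrt (Q ^ 2 - 4 * κ * S)) / (2 * κ))) := by
  set D := Real.sqrt (Q ^ 2 - 4 * κ * S) with hDdef
  have hD2 : D ^ 2 = Q ^ 2 - 4 * κ * S := Real.sq_sqrt hdisc.le
  have hDpos : 0 < D := Real.sqrt_pos.mpr hdisc
  have hDltQ : D < -Q := by nlinarith
  set r₁ : ℝ := (-Q - D) / (2 * κ) with hr₁def
  set r₂ : ℝ := (-Q + D) / (2 * κ) with hr₂def
  have h2κ : (0 : ℝ) < 2 * κ := by linarith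
  have hr₁pos : 0 < r₁ := div_pos (by linarith) h2κ
  have hr₂pos : 0 < r₂ := div_pos (by linarith) h2κ
  have hr₁₂ : r₁ < r₂ := by
    rw [hr₁def, hr₂def, div_lt_div_iff₀ h2κ h2κ]; nlinarith
  -- factorization of the quadratic
  have hfac : ∀ x : ℝ, κ * x ^ 2 + Q * x + S = κ * (x - r₁) * (x - r₂) := by
    intro x
    rw [hr₁def, hr₂def]
    field_simp
    nlinarith [hD2]
  clear_value D r₁ r₂
  -- continuity of F on [0, ∞)
  have hFc : ∀ t ≥ (0 : ℝ), ContinuousAt F t := fun t ht => (hF t ht).continuousAt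
  -- auxiliary integrand, continuous on all of ℝ
  have hgc : Continuous fun s : ℝ => κ * (F (max s 0) - r₁) := by
    refine continuous_const.mul (Continuous.sub ?_ continuous_const)
    have hFon : ContinuousOn F (Ici 0) := fun x hx => (hFc x hx).continuousWithinAt
    exact hFon.comp_continuous (continuous_id.max continuous_const)
      fun x => le_max_right x 0
  set B : ℝ → ℝ := fun t => ∫ s in (0 : ℝ)..t, κ * (F (max s 0) - r₁) with hBdef
  have hB : ∀ t, HasDerivAt B (κ * (F (max t 0) - r₁)) t := fun t =>
    (hgc.integral_hasStrictDerivAt 0 t).hasDerivAt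
  -- F t - r₂ = -(r₂) * exp (B t) on [0, ∞); in particular F t < r₂
  have hP : ∀ t ≥ (0 : ℝ), (F t - r₂) * Real.exp (-B t) = -r₂ := by
    have := aux_const_of_deriv_zero (f := fun t => (F t - r₂) * Real.exp (-B t)) ?_
    · intro t ht
      have h0 := this t ht
      rw [h0]
      simp [hBdef, hF0]
    · intro t ht
      have hd1 : HasDerivAt (fun t => F t - r₂)
          (κ * (F t - r₁) * (F t - r₂)) t := by
        have := (hF t ht).sub_const r₂
        rwa [hfac (F t)] at this
      have hd2 : HasDerivAt (fun t => Real.exp (-B t))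
          (-(κ * (F (max t 0) - r₁)) * Real.exp (-B t)) t := by
        have := ((hB t).neg).exp
        exact this.congr_deriv (by simp only [Pi.neg_apply]; ring)
      have := hd1.mul hd2
      exact this.congr_deriv (by rw [max_eq_left ht]; ring)
  have hFlt : ∀ t ≥ (0 : ℝ), F t < r₂ := by
    intro t ht
    have h := hP t ht
    nlinarith [Real.exp_pos (-B t), Real.exp_pos (B t),
      Real.exp_neg (B t) ▸ Real.exp_pos (-B t)]
  have hne : ∀ t ≥ (0 : ℝ), F t - r₂ ≠ 0 := fun t ht => by
    have := hFlt t ht; linarith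
  -- the Möbius transform G
  set c : ℝ := κ * (r₁ - r₂) with hcdef
  have hcneg : c < 0 := mul_neg_of_pos_of_neg hκ (by linarith)
  set G : ℝ → ℝ := fun t => (F t - r₁) / (F t - r₂) with hGdef
  have hGeq : ∀ t ≥ (0 : ℝ), G t = r₁ / r₂ * Real.exp (c * t) := by
    have key := aux_const_of_deriv_zero (f := fun t => G t * Real.exp (-(c * t))) ?_
    · intro t ht
      have h0 := key t ht
      simp only [mul_zero, neg_zero, Real.exp_zero, mul_one] at h0
      have h1 : G 0 = r₁ / r₂ := by
        simp only [hGdef, hF0, zero_sub, neg_div_neg_eq]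
      rw [h1] at h0
      have h2 : Real.exp (-(c * t)) * Real.exp (c * t) = 1 := by
        rw [← Real.exp_add]; simp
      calc G t = G t * Real.exp (-(c * t)) * Real.exp (c * t) := by
            rw [mul_assoc, h2, mul_one]
        _ = r₁ / r₂ * Real.exp (c * t) := by rw [h0]
    · intro t ht
      have hd1 : HasDerivAt (fun t => F t - r₁)
          (κ * (F t - r₁) * (F t - r₂)) t := by
        have := (hF t ht).sub_const r₁
        rwa [hfac (F t)] at this
      have hd2 : HasDerivAt (fun t => F t - r₂)
          (κ * (F t - r₁) * (F t - r₂)) t := by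
        have := (hF t ht).sub_const r₂
        rwa [hfac (F t)] at this
      have hdG : HasDerivAt G (c * G t) t := by
        have := hd1.div hd2 (hne t ht)
        refine this.congr_deriv ?_
        rw [hGdef, hcdef]
        field_simp [hne t ht]
        ring
      have hdE : HasDerivAt (fun t => Real.exp (-(c * t)))
          (-c * Real.exp (-(c * t))) t := by
        have h3 : HasDerivAt (fun t : ℝ => -(c * t)) (-c) t := by
          exact (((hasDerivAt_id t).const_mul c).neg).congr_deriv (by simp)
        have := h3.exp
        convert this using 1
        ring
      have := hdG.mul hdE
      exact this.congr_deriv (by ring)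
  -- bounds on G
  have hGlt1 : ∀ t ≥ (0 : ℝ), G t < 1 := by
    intro t ht
    rw [hGeq t ht]
    have h1 : Real.exp (c * t) ≤ 1 := by
      rw [Real.exp_le_one_iff]
      exact mul_nonpos_of_nonpos_of_nonneg hcneg.le ht
    have h2 : r₁ / r₂ < 1 := (div_lt_one hr₂pos).mpr hr₁₂
    nlinarith [Real.exp_pos (c * t), div_pos hr₁pos hr₂pos]
  -- explicit formula for F on [0, ∞)
  have hFform : ∀ t ≥ (0 : ℝ), F t =
      (r₁ - r₂ * (r₁ / r₂ * Real.exp (c * t))) / (1 - r₁ / r₂ * Real.exp (c * t)) := by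
    intro t ht
    have h1 : F t - r₁ = G t * (F t - r₂) := by
      rw [hGdef]; exact (div_mul_cancel₀ _ (hne t ht)).symm
    have h2 : G t ≠ 1 := ne_of_lt (hGlt1 t ht)
    have h3 : F t * (1 - G t) = r₁ - r₂ * G t := by linarith [h1, mul_comm (G t) (F t - r₂)]
    have h4 : (1 : ℝ) - G t ≠ 0 := sub_ne_zero.mpr (Ne.symm h2)
    have h5 : F t = (r₁ - r₂ * G t) / (1 - G t) := by
      field_simp at h3 ⊢; linarith
    rw [h5, hGeq t ht]
  -- the limit
  have hexp0 : Tendsto (fun t : ℝ => Real.exp (c * t)) atTop (nhds 0) := by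
    have h1 : Tendsto (fun t : ℝ => c * t) atTop atBot :=
      (tendsto_const_mul_atBot_of_neg hcneg).mpr tendsto_id
    exact Real.tendsto_exp_atBot.comp h1
  have hnum : Tendsto (fun t : ℝ => r₁ - r₂ * (r₁ / r₂ * Real.exp (c * t))) atTop
      (nhds r₁) := by
    have := ((hexp0.const_mul (r₁ / r₂)).const_mul r₂).const_sub r₁
    simpa using this
  have hden : Tendsto (fun t : ℝ => 1 - r₁ / r₂ * Real.exp (c * t)) atTop (nhds 1) := by
    have := (hexp0.const_mul (r₁ / r₂)).const_sub 1
    simpa using this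
  have hlim : Tendsto (fun t : ℝ =>
      (r₁ - r₂ * (r₁ / r₂ * Real.exp (c * t))) / (1 - r₁ / r₂ * Real.exp (c * t)))
      atTop (nhds r₁) := by
    have := hnum.div hden one_ne_zero
    rw [div_one] at this
    exact this
  have htarget : -(Q + D) / (2 * κ) = r₁ := by rw [hr₁def]; ring_nf
  rw [htarget]
  refine hlim.congr' ?_
  exact Filter.eventuallyEq_of_mem (Ici_mem_atTop 0) fun t ht => (hFform t ht).symm
end

section
/- Let L ∈ ℝ^{n×n} be a diagonal matrix with all diagonal entries strictly negative, and let P : [0,∞) → ℝ^{n×n} be continuous with P(t) → 0 as t → ∞. Then every solution of x'(t) = (L + P(t)) x(t) satisfies x(t) → 0 as t → ∞. -/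
open Matrix

theorem stmt_10 (n : ℕ) (L : Matrix (Fin n) (Fin n) ℝ)
    (hdiag : L.IsDiag) (hneg : ∀ i, L i i < 0)
    (P : ℝ → Matrix (Fin n) (Fin n) ℝ)
    (hPcont : Continuous P)
    (hPlim : Filter.Tendsto P Filter.atTop (nhds 0))
    (x : ℝ → Fin n → ℝ)
    (hx : ∀ t ≥ (0 : ℝ), HasDerivAt x ((L + P t).mulVec (x t)) t) :
    Filter.Tendsto x Filter.atTop (nhds 0) := by
  rcases Nat.eq_zero_or_pos n with hn | hn
  · subst hn
    have hx0 : x = fun _ => 0 := funext fun t => Subsingleton.elim _ _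
    rw [hx0]
    exact tendsto_const_nhds
  haveI : Nonempty (Fin n) := ⟨⟨0, hn⟩⟩
  set lam : ℝ := Finset.univ.inf' Finset.univ_nonempty (fun i => -L i i) with hlam_def
  have hlam_pos : 0 < lam := by
    rw [hlam_def, Finset.lt_inf'_iff]
    intro i _
    linarith [hneg i]
  have hlam_le : ∀ i, L i i ≤ -lam := by
    intro i
    have := Finset.inf'_le (fun i => -L i i) (Finset.mem_univ i)
    linarith
  set ε : ℝ := lam / (2 * n) with hε_def
  have hε_pos : 0 < ε := by
    apply div_pos hlam_pos
    positivity
  -- entrywise convergence of P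
  have hent : ∀ i j, Filter.Tendsto (fun t => P t i j) Filter.atTop (nhds 0) := by
    intro i j
    have hc : Continuous (fun M : Matrix (Fin n) (Fin n) ℝ => M i j) :=
      (continuous_apply j).comp (continuous_apply i)
    have := (hc.tendsto 0).comp hPlim
    simpa [Function.comp_def] using this
  have hev : ∀ᶠ t in Filter.atTop, ∀ i j, |P t i j| ≤ ε := by
    rw [Filter.eventually_all]
    intro i
    rw [Filter.eventually_all]
    intro j
    have habs : Filter.Tendsto (fun t => |P t i j|) Filter.atTop (nhds 0) := by
      simpa using (hent i j).abs
    exact (habs.eventually_lt_const hε_pos).mono fun t ht => le_of_lt ht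
  obtain ⟨T₀, hT₀⟩ := Filter.eventually_atTop.mp hev
  set T : ℝ := max T₀ 0 with hT_def
  have hT0 : (0 : ℝ) ≤ T := le_max_right _ _
  have hPbd : ∀ t, T ≤ t → ∀ i j, |P t i j| ≤ ε := fun t ht =>
    hT₀ t (le_trans (le_max_left _ _) ht)
  -- component derivatives
  have hxi : ∀ i, ∀ t, (0 : ℝ) ≤ t →
      HasDerivAt (fun s => x s i) (((L + P t).mulVec (x t)) i) t := by
    intro i t ht
    have := (ContinuousLinearMap.proj (R := ℝ) (φ := fun _ : Fin n => ℝ) i).hasFDerivAt.comp_hasDerivAt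
      t (hx t ht)
    simpa [Function.comp_def] using this
  set g : ℝ → ℝ := fun t => ∑ i, x t i ^ 2 with hg_def
  have hg : ∀ t, (0 : ℝ) ≤ t →
      HasDerivAt g (∑ i, 2 * x t i * ((L + P t).mulVec (x t)) i) t := by
    intro t ht
    have : HasDerivAt (fun s => ∑ i, x s i ^ 2)
        (∑ i, (2 : ℕ) * x t i ^ 1 * ((L + P t).mulVec (x t)) i) t :=
      HasDerivAt.fun_sum fun i _ => (hxi i t ht).fun_pow 2
    simpa [pow_one, mul_assoc] using this
  have hg_nonneg : ∀ t, 0 ≤ g t := fun t => Finset.sum_nonneg fun i _ => sq_nonneg _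
  -- key inequality
  have key : ∀ t, T ≤ t →
      (∑ i, 2 * x t i * ((L + P t).mulVec (x t)) i) ≤ -lam * g t := by
    intro t ht
    have hLmv : ∀ i, L.mulVec (x t) i = L i i * x t i := by
      intro i
      rw [mulVec, dotProduct, Finset.sum_eq_single i]
      · intro j _ hj
        rw [hdiag (Ne.symm hj), zero_mul]
      · intro h; exact absurd (Finset.mem_univ i) h
    have hsplit : (∑ i, 2 * x t i * ((L + P t).mulVec (x t)) i)
        = (∑ i, 2 * (L i i) * x t i ^ 2) + 2 * ∑ i, x t i * (P t).mulVec (x t) i := by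
      rw [Finset.mul_sum, ← Finset.sum_add_distrib]
      refine Finset.sum_congr rfl fun i _ => ?_
      rw [add_mulVec, Pi.add_apply, hLmv i]
      ring
    rw [hsplit]
    have hb1 : (∑ i, 2 * (L i i) * x t i ^ 2) ≤ ∑ i, (-2 * lam) * x t i ^ 2 := by
      refine Finset.sum_le_sum fun i _ => ?_
      have := hlam_le i
      nlinarith [sq_nonneg (x t i)]
    have hb2 : (∑ i, x t i * (P t).mulVec (x t) i) ≤ ε * (∑ i, |x t i|) ^ 2 := by
      have : ∀ i, x t i * (P t).mulVec (x t) i ≤ ε * (|x t i| * ∑ j, |x t j|) := by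
        intro i
        have h1 : x t i * (P t).mulVec (x t) i ≤ |x t i * (P t).mulVec (x t) i| := le_abs_self _
        rw [abs_mul] at h1
        have h2 : |(P t).mulVec (x t) i| ≤ ε * ∑ j, |x t j| := by
          rw [mulVec, dotProduct]
          refine le_trans (Finset.abs_sum_le_sum_abs _ _) ?_
          rw [Finset.mul_sum]
          refine Finset.sum_le_sum fun j _ => ?_
          rw [abs_mul]
          exact mul_le_mul_of_nonneg_right (hPbd t ht i j) (abs_nonneg _)
        calc x t i * (P t).mulVec (x t) i ≤ |x t i| * |(P t).mulVec (x t) i| := h1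
          _ ≤ |x t i| * (ε * ∑ j, |x t j|) :=
              mul_le_mul_of_nonneg_left h2 (abs_nonneg _)
          _ = ε * (|x t i| * ∑ j, |x t j|) := by ring
      calc (∑ i, x t i * (P t).mulVec (x t) i) ≤ ∑ i, ε * (|x t i| * ∑ j, |x t j|) :=
            Finset.sum_le_sum fun i _ => this i
        _ = ε * (∑ i, |x t i|) ^ 2 := by rw [← Finset.mul_sum, ← Finset.sum_mul]; ring
    have hCS : (∑ i, |x t i|) ^ 2 ≤ (n : ℝ) * g t := by
      have h := Finset.sum_mul_sq_le_sq_mul_sq Finset.univ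
        (fun _ : Fin n => (1 : ℝ)) (fun i => |x t i|)
      simp only [one_mul, one_pow] at h
      calc (∑ i, |x t i|) ^ 2 ≤ (∑ _i : Fin n, (1:ℝ)) * ∑ i, |x t i| ^ 2 := h
        _ = (n : ℝ) * g t := by
            simp [hg_def, sq_abs]
    have hb2' : 2 * (∑ i, x t i * (P t).mulVec (x t) i) ≤ lam * g t := by
      have h1 : (∑ i, x t i * (P t).mulVec (x t) i) ≤ ε * ((n : ℝ) * g t) :=
        le_trans hb2 (mul_le_mul_of_nonneg_left hCS (le_of_lt hε_pos))
      have hn' : (0 : ℝ) < (n : ℝ) := by exact_mod_cast hn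
      have : ε * (n : ℝ) = lam / 2 := by
        rw [hε_def]; field_simp
      nlinarith [hg_nonneg t]
    have hsum : (∑ i, (-2 * lam) * x t i ^ 2) = -2 * lam * g t := by
      rw [hg_def, Finset.mul_sum]
    nlinarith
  -- the Lyapunov function h = g * exp(lam t) is antitone on [T, ∞)
  set h : ℝ → ℝ := fun t => g t * Real.exp (lam * t) with hh_def
  have hh_deriv : ∀ t, (0:ℝ) ≤ t → HasDerivAt h
      ((∑ i, 2 * x t i * ((L + P t).mulVec (x t)) i) * Real.exp (lam * t)
        + g t * (lam * Real.exp (lam * t))) t := by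
    intro t ht
    have he : HasDerivAt (fun s => Real.exp (lam * s)) (lam * Real.exp (lam * t)) t := by
      have := ((hasDerivAt_id t).const_mul lam).exp
      simpa [mul_comm] using this
    exact (hg t ht).mul he
  have hanti : AntitoneOn h (Set.Ici T) := by
    apply antitoneOn_of_deriv_nonpos (convex_Ici T)
    · intro t ht
      exact ((hh_deriv t (le_trans hT0 ht)).continuousAt).continuousWithinAt
    · intro t ht
      rw [interior_Ici] at ht
      exact ((hh_deriv t (le_trans hT0 (le_of_lt ht))).differentiableAt).differentiableWithinAt
    · intro t ht
      rw [interior_Ici] at ht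
      have ht' : T ≤ t := le_of_lt ht
      rw [((hh_deriv t (le_trans hT0 ht')).deriv)]
      have hk := key t ht'
      have hexp : (0 : ℝ) < Real.exp (lam * t) := Real.exp_pos _
      nlinarith [hg_nonneg t]
  -- g t ≤ C * exp (-lam * t) for t ≥ T
  have hgbd : ∀ t, T ≤ t → g t ≤ (g T * Real.exp (lam * T)) * Real.exp (-(lam * t)) := by
    intro t ht
    have := hanti (Set.self_mem_Ici) (Set.mem_Ici.mpr ht) ht
    rw [hh_def] at this
    have hexp : (0 : ℝ) < Real.exp (lam * t) := Real.exp_pos _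
    simp only at this
    rw [Real.exp_neg]
    calc g t = g t * Real.exp (lam * t) * (Real.exp (lam * t))⁻¹ := by
          field_simp
      _ ≤ g T * Real.exp (lam * T) * (Real.exp (lam * t))⁻¹ := by
          apply mul_le_mul_of_nonneg_right this (by positivity)
  -- bound tends to 0
  have hbd_tendsto : Filter.Tendsto
      (fun t => (g T * Real.exp (lam * T)) * Real.exp (-(lam * t)))
      Filter.atTop (nhds 0) := by
    have h2 : Filter.Tendsto (fun t : ℝ => lam * t) Filter.atTop Filter.atTop :=
      Filter.Tendsto.const_mul_atTop hlam_pos Filter.tendsto_id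
    have h1 : Filter.Tendsto (fun t : ℝ => Real.exp (-(lam * t))) Filter.atTop (nhds 0) :=
      Real.tendsto_exp_atBot.comp (Filter.tendsto_neg_atBot_iff.mpr h2)
    have := h1.const_mul (g T * Real.exp (lam * T))
    simpa using this
  have hg_tendsto : Filter.Tendsto g Filter.atTop (nhds 0) := by
    apply squeeze_zero' (Filter.Eventually.of_forall hg_nonneg) _ hbd_tendsto
    exact Filter.eventually_atTop.mpr ⟨T, hgbd⟩
  -- conclude componentwise
  rw [tendsto_pi_nhds]
  intro i
  have hi2 : Filter.Tendsto (fun t => x t i ^ 2) Filter.atTop (nhds 0) := by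
    apply squeeze_zero' (Filter.Eventually.of_forall fun t => sq_nonneg _)
      (Filter.Eventually.of_forall fun t => Finset.single_le_sum
        (f := fun j => x t j ^ 2) (fun j _ => sq_nonneg _) (Finset.mem_univ i))
      hg_tendsto
  have habs : Filter.Tendsto (fun t => |x t i|) Filter.atTop (nhds 0) := by
    have := (Real.continuous_sqrt.tendsto 0).comp hi2
    simpa [Function.comp_def, Real.sqrt_sq_eq_abs] using this
  have := (tendsto_zero_iff_abs_tendsto_zero (fun t => x t i)).mpr habs
  simpa using this
end

section
/- Let A : ℝ → ℝ^{n×n} be continuous and T-periodic, and suppose ∫_{t₀}^{t₀+T} μ[A(τ)] dτ < 0 for the logarithmic norm μ. Then the system x' = A(t)x is uniformly exponentially stable: there exist K ≥ 1 and α > 0 with ‖Φ(t,τ)‖ ≤ K e^{-α(t-τ)} for all t ≥ τ. -/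
open Matrix

attribute [local instance] Matrix.linftyOpNormedAddCommGroup Matrix.linftyOpNormedRing
  Matrix.linftyOpNormedSpace

theorem stmt_13 (n : ℕ) (A : ℝ → Matrix (Fin n) (Fin n) ℝ) (T t₀ : ℝ) (hT : 0 < T)
    (hAcont : Continuous A)
    (hAper : ∀ t, A (t + T) = A t)
    (μA : ℝ → ℝ)
    (hμ : ∀ t, Filter.Tendsto (fun h : ℝ => (‖(1 : Matrix (Fin n) (Fin n) ℝ) + h • A t‖ - 1) / h)
      (nhdsWithin 0 (Set.Ioi 0)) (nhds (μA t)))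
    (hμcont : Continuous μA)
    (hint : (∫ τ in t₀..(t₀ + T), μA τ) < 0)
    (Φ : ℝ → ℝ → Matrix (Fin n) (Fin n) ℝ)
    (hΦ0 : ∀ τ, Φ τ τ = 1)
    (hΦ : ∀ τ t, HasDerivAt (fun s => Φ s τ) (A t * Φ t τ) t) :
    ∃ K α : ℝ, 1 ≤ K ∧ 0 < α ∧
      ∀ τ t, τ ≤ t → ‖Φ t τ‖ ≤ K * Real.exp (-α * (t - τ)) := by
  classical
  rcases Nat.eq_zero_or_pos n with hn | hn
  · -- trivial case `n = 0`
    subst hn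
    refine ⟨1, 1, le_refl 1, one_pos, fun τ t _ => ?_⟩
    have h0 : Φ t τ = 0 := by
      ext i j
      exact i.elim0
    rw [h0, norm_zero]
    positivity
  haveI : Nonempty (Fin n) := Fin.pos_iff_nonempty.mp hn
  -- continuity of the flow
  have hΦcont : ∀ τ, Continuous (fun s => Φ s τ) := fun τ =>
    continuous_iff_continuousAt.mpr fun x => (hΦ τ x).continuousAt
  -- integrability of μA
  have hμint : ∀ a b : ℝ, IntervalIntegrable μA MeasureTheory.volume a b := fun a b =>
    hμcont.intervalIntegrable a b
  -- the Coppel estimate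
  have coppel : ∀ τ t, τ ≤ t → ‖Φ t τ‖ ≤ Real.exp (∫ s in τ..t, μA s) := by
    intro τ t hτt
    have key : ∀ ε : ℝ, 0 < ε →
        ‖Φ t τ‖ ≤ Real.exp ((∫ s in τ..t, μA s) + ε * (t - τ)) := by
      intro ε hε
      set B : ℝ → ℝ := fun s => Real.exp ((∫ u in τ..s, μA u) + ε * (s - τ)) with hB
      have hBderiv : ∀ x, HasDerivAt B ((μA x + ε) * B x) x := by
        intro x
        have h1 : HasDerivAt (fun s => (∫ u in τ..s, μA u) + ε * (s - τ)) (μA x + ε * 1) x := by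
          refine HasDerivAt.add ?_ (((hasDerivAt_id x).sub_const τ).const_mul ε)
          exact intervalIntegral.integral_hasDerivAt_right (hμint τ x)
            hμcont.aestronglyMeasurable.stronglyMeasurableAtFilter hμcont.continuousAt
        have := h1.exp
        simpa [hB, mul_comm, mul_one] using this
      have hfcont : ContinuousOn (fun s => ‖Φ s τ‖) (Set.Icc τ t) :=
        (continuous_norm.comp (hΦcont τ)).continuousOn
      have hf' : ∀ x ∈ Set.Ico τ t, ∀ r, μA x * ‖Φ x τ‖ < r →
          ∃ᶠ z in nhdsWithin x (Set.Ioi x), slope (fun s => ‖Φ s τ‖) x z < r := by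
        intro x _ r hr
        have hD := hΦ τ x
        have hlittle : (fun z => Φ z τ - Φ x τ - (z - x) • (A x * Φ x τ)) =o[nhds x]
            fun z => z - x := hasDerivAt_iff_isLittleO.mp hD
        -- second term of the bound tends to 0
        have h2 : Filter.Tendsto
            (fun z => ‖Φ z τ - Φ x τ - (z - x) • (A x * Φ x τ)‖ / (z - x))
            (nhdsWithin x (Set.Ioi x)) (nhds 0) := by
          have h2' := hlittle.norm_norm.tendsto_div_nhds_zero
          refine Filter.Tendsto.congr' ?_ (h2'.mono_left nhdsWithin_le_nhds)
          filter_upwards [self_mem_nhdsWithin] with z hz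
          rw [Real.norm_eq_abs, abs_of_pos (sub_pos.mpr hz)]
        -- first term tends to μA x * ‖Φ x τ‖
        have hmap : Filter.Tendsto (fun z => z - x) (nhdsWithin x (Set.Ioi x))
            (nhdsWithin 0 (Set.Ioi 0)) := by
          apply tendsto_nhdsWithin_of_tendsto_nhds_of_eventually_within
          · have : Filter.Tendsto (fun z : ℝ => z - x) (nhds x) (nhds (x - x)) :=
              (continuous_id.sub continuous_const).tendsto x
            simpa using this.mono_left nhdsWithin_le_nhds
          · filter_upwards [self_mem_nhdsWithin] with z hz using Set.mem_Ioi.mpr (sub_pos.mpr (Set.mem_Ioi.mp hz))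
        have h1 := ((hμ x).comp hmap).mul_const ‖Φ x τ‖
        have h3 := h1.add h2
        rw [add_zero] at h3
        have hev : ∀ᶠ z in nhdsWithin x (Set.Ioi x),
            ((fun h : ℝ => (‖(1 : Matrix (Fin n) (Fin n) ℝ) + h • A x‖ - 1) / h) ∘
              fun z => z - x) z * ‖Φ x τ‖ +
              ‖Φ z τ - Φ x τ - (z - x) • (A x * Φ x τ)‖ / (z - x) < r :=
          h3.eventually_lt_const hr
        have hslope : ∀ᶠ z in nhdsWithin x (Set.Ioi x),
            slope (fun s => ‖Φ s τ‖) x z < r := by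
          filter_upwards [hev, self_mem_nhdsWithin] with z hless hz
          refine lt_of_le_of_lt ?_ hless
          have hzx : (0:ℝ) < z - x := sub_pos.mpr hz
          have e1 : Φ z τ = (1 + (z - x) • A x) * Φ x τ +
              (Φ z τ - Φ x τ - (z - x) • (A x * Φ x τ)) := by
            rw [add_mul, one_mul, smul_mul_assoc]
            abel
          have hnum : ‖Φ z τ‖ - ‖Φ x τ‖ ≤
              (‖(1 : Matrix (Fin n) (Fin n) ℝ) + (z - x) • A x‖ - 1) * ‖Φ x τ‖ +
              ‖Φ z τ - Φ x τ - (z - x) • (A x * Φ x τ)‖ := by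
            have hb : ‖Φ z τ‖ ≤ ‖(1 : Matrix (Fin n) (Fin n) ℝ) + (z - x) • A x‖ * ‖Φ x τ‖ +
                ‖Φ z τ - Φ x τ - (z - x) • (A x * Φ x τ)‖ := by
              calc ‖Φ z τ‖ ≤ ‖(1 + (z - x) • A x) * Φ x τ‖ +
                  ‖Φ z τ - Φ x τ - (z - x) • (A x * Φ x τ)‖ := by
                    conv_lhs => rw [e1]
                    exact norm_add_le ((1 + (z - x) • A x) * Φ x τ)
                      (Φ z τ - Φ x τ - (z - x) • (A x * Φ x τ))
                _ ≤ _ := by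
                    have := Matrix.linfty_opNorm_mul ((1 : Matrix (Fin n) (Fin n) ℝ) + (z - x) • A x) (Φ x τ)
                    linarith
            nlinarith [norm_nonneg (Φ x τ)]
          rw [slope_def_field]
          calc (‖Φ z τ‖ - ‖Φ x τ‖) / (z - x) ≤
              ((‖(1 : Matrix (Fin n) (Fin n) ℝ) + (z - x) • A x‖ - 1) * ‖Φ x τ‖ +
                ‖Φ z τ - Φ x τ - (z - x) • (A x * Φ x τ)‖) / (z - x) := by
                gcongr
            _ = _ := by
                rw [add_div, Function.comp]
                ring
        exact hslope.frequently
      have ha : ‖Φ τ τ‖ ≤ B τ := by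
        rw [hΦ0 τ, norm_one, hB]
        simp
      have bound : ∀ x ∈ Set.Ico τ t, ‖Φ x τ‖ = B x →
          μA x * ‖Φ x τ‖ < (μA x + ε) * B x := by
        intro x _ hfB
        rw [hfB]
        have hBpos : 0 < B x := Real.exp_pos _
        nlinarith
      exact image_le_of_liminf_slope_right_lt_deriv_boundary
        (f' := fun x => μA x * ‖Φ x τ‖) hfcont hf' ha hBderiv bound ⟨hτt, le_refl t⟩
    have hlim : Filter.Tendsto (fun ε : ℝ => Real.exp ((∫ s in τ..t, μA s) + ε * (t - τ)))
        (nhdsWithin 0 (Set.Ioi 0)) (nhds (Real.exp (∫ s in τ..t, μA s))) := by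
      have hc : Continuous fun ε : ℝ => Real.exp ((∫ s in τ..t, μA s) + ε * (t - τ)) := by
        continuity
      simpa using (hc.tendsto 0).mono_left nhdsWithin_le_nhds
    refine ge_of_tendsto hlim ?_
    filter_upwards [self_mem_nhdsWithin] with ε hε using key ε hε
  -- periodicity of μA
  have hμper : Function.Periodic μA T := by
    intro s
    have h1 := hμ (s + T)
    rw [hAper s] at h1
    exact tendsto_nhds_unique h1 (hμ s)
  -- the primitive of μA
  set F : ℝ → ℝ := fun s => ∫ u in t₀..s, μA u with hF
  have hFderiv : ∀ x, HasDerivAt F (μA x) x := fun x =>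
    intervalIntegral.integral_hasDerivAt_right (hμint t₀ x)
      hμcont.aestronglyMeasurable.stronglyMeasurableAtFilter hμcont.continuousAt
  have hFcont : Continuous F := continuous_iff_continuousAt.mpr fun x => (hFderiv x).continuousAt
  set c : ℝ := -(∫ τ in t₀..(t₀ + T), μA τ) with hc
  have hcpos : 0 < c := by rw [hc]; linarith
  set α : ℝ := c / T with hα
  have hαpos : 0 < α := div_pos hcpos hT
  set G : ℝ → ℝ := fun s => F s + α * s with hG
  have hGper : Function.Periodic G T := by
    intro s
    have hadd : F s + (∫ u in s..(s + T), μA u) = F (s + T) :=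
      intervalIntegral.integral_add_adjacent_intervals (hμint t₀ s) (hμint s (s + T))
    have hper : (∫ u in s..(s + T), μA u) = ∫ τ in t₀..(t₀ + T), μA τ :=
      hμper.intervalIntegral_add_eq s t₀
    have hαT : α * T = c := by
      rw [hα]; field_simp
    have hFT : F (s + T) = F s - c := by
      rw [← hadd, hper, hc]; ring
    show F (s + T) + α * (s + T) = F s + α * s
    rw [hFT]
    have he : α * (s + T) = α * s + α * T := by ring
    rw [he, hαT]
    ring
  -- G is bounded
  obtain ⟨M, hM⟩ := (isCompact_Icc (a := t₀) (b := t₀ + T)).exists_bound_of_continuousOn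
    ((hFcont.add (continuous_const.mul continuous_id)).continuousOn)
  have hGbd : ∀ s, |G s| ≤ M := by
    intro s
    have hmem := toIcoMod_mem_Ico hT t₀ s
    have heq : G (toIcoMod hT t₀ s) = G s := by
      rw [toIcoMod]
      exact hGper.sub_zsmul_eq _
    have := hM _ (Set.mem_Icc_of_Ico hmem)
    rw [Real.norm_eq_abs] at this
    calc |G s| = |G (toIcoMod hT t₀ s)| := by rw [heq]
      _ ≤ M := this
  refine ⟨max (Real.exp (2 * M)) 1, α, le_max_right _ _, hαpos, fun τ t hτt => ?_⟩
  have hsub : (∫ s in τ..t, μA s) = F t - F τ := by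
    rw [hF, ← intervalIntegral.integral_interval_sub_left (hμint t₀ t) (hμint t₀ τ)]
  have hineq : (∫ s in τ..t, μA s) ≤ 2 * M + -α * (t - τ) := by
    rw [hsub]
    have h1 := hGbd t
    have h2 := hGbd τ
    rw [abs_le] at h1 h2
    have e1 : F t = G t - α * t := by show F t = F t + α * t - α * t; ring
    have e2 : F τ = G τ - α * τ := by show F τ = F τ + α * τ - α * τ; ring
    rw [e1, e2]
    obtain ⟨h1a, h1b⟩ := h1
    obtain ⟨h2a, h2b⟩ := h2
    nlinarith
  calc ‖Φ t τ‖ ≤ Real.exp (∫ s in τ..t, μA s) := coppel τ t hτt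
    _ ≤ Real.exp (2 * M + -α * (t - τ)) := Real.exp_le_exp.mpr hineq
    _ = Real.exp (2 * M) * Real.exp (-α * (t - τ)) := Real.exp_add _ _
    _ ≤ max (Real.exp (2 * M)) 1 * Real.exp (-α * (t - τ)) := by
        have := Real.exp_pos (-α * (t - τ))
        exact mul_le_mul_of_nonneg_right (le_max_left _ _) this.le
end
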